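/- Let G = (V,E) with V = {1,...,n}, N_m = {1,...,m}, G*(N_m) as above, 2 ≤ m ≤ n, and U ⊆ N_{m−1} with G*(N_{m−1}) \ U connected. Let γ_m be the set of neighbors of vertex m in G*(N_m). If γ_m − U = ∅, then G*(N_m) \ (U ∪ {m}) is connected while G*(N_m) \ U is disconnected; if |γ_m − U| = 1, then both G*(N_m) \ U and G*(N_m) \ (U ∪ {m}) are connected; and if |γ_m − U| ≥ 2, then G*(N_m) \ U is connected. -/

import Mathlib

/-!
Adding the vertex `w` to `S` only changes `G*` in one way: an edge `u v` of `G*(S)` whose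
connecting path passes through `w` is replaced by the two edges `u w` and `w v` of
`G*(S ∪ {w})`. Hence every walk of `G*(S) \ U` survives in `G*(S ∪ {w}) \ U` once detours
through `w` are allowed. If `w` has a neighbour outside `U`, it is attached to the connected
rest; if it has at most one, no edge `u v` between vertices outside `U` can be replaced, so
`G*(S) \ U` stays connected without `w`; if it has none, `w` is isolated.
-/

/-- The graph `G*(S)` on vertex subset `S`: distinct `u, v ∈ S` are adjacent iff
there is a path (walk) between `u` and `v` in `G` all of whose intermediate
vertices lie outside `S`. Vertices outside `S` are isolated. -/
def GStar {V : Type} (G : SimpleGraph V) (S : Set V) : SimpleGraph V where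
  Adj u v := u ≠ v ∧ u ∈ S ∧ v ∈ S ∧
    ∃ p : G.Walk u v, ∀ x ∈ p.support, x ≠ u → x ≠ v → x ∉ S
  symm := by
    refine ⟨?_⟩
    rintro u v ⟨hne, hu, hv, p, hp⟩
    refine ⟨hne.symm, hv, hu, p.reverse, ?_⟩
    intro x hx hxv hxu
    exact hp x (by simpa [SimpleGraph.Walk.support_reverse] using hx) hxu hxv
  loopless := ⟨fun u h => h.1 rfl⟩

/-- `a` and `b` are joined by a walk in `G` whose vertices all lie in `A`
(i.e. they are in the same component of the induced subgraph on `A`). -/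
def ReachIn {V : Type} (G : SimpleGraph V) (A : Set V) (a b : V) : Prop :=
  ∃ p : G.Walk a b, ∀ x ∈ p.support, x ∈ A

/-- The vertex set `A` is connected in `H` (restricted to `A`). -/
def ConnOn {V : Type} (H : SimpleGraph V) (A : Set V) : Prop :=
  A.Nonempty ∧ ∀ a ∈ A, ∀ b ∈ A, ReachIn H A a b

/-- The vertex set `A` is disconnected in `H` (restricted to `A`). -/
def DiscOn {V : Type} (H : SimpleGraph V) (A : Set V) : Prop :=
  ∃ a ∈ A, ∃ b ∈ A, ¬ ReachIn H A a b

namespace ReachIn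

variable {V : Type} {G H : SimpleGraph V} {A B : Set V} {a b c : V}

lemma refl (ha : a ∈ A) : ReachIn G A a a :=
  ⟨.nil, by simpa using ha⟩

lemma trans (h₁ : ReachIn G A a b) (h₂ : ReachIn G A b c) : ReachIn G A a c := by
  obtain ⟨p, hp⟩ := h₁
  obtain ⟨q, hq⟩ := h₂
  exact ⟨p.append q, fun x hx => ((p.mem_support_append_iff q).mp hx).elim (hp x) (hq x)⟩

lemma symm (h : ReachIn G A a b) : ReachIn G A b a := by
  obtain ⟨p, hp⟩ := h
  exact ⟨p.reverse, fun x hx => hp x (by simpa using hx)⟩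

lemma of_adj (h : G.Adj a b) (ha : a ∈ A) (hb : b ∈ A) : ReachIn G A a b :=
  ⟨h.toWalk, by simp [ha, hb]⟩

lemma mono_of_adj (hAB : A ⊆ B) (hadj : ∀ u ∈ A, ∀ v ∈ A, G.Adj u v → ReachIn H B u v)
    (h : ReachIn G A a b) : ReachIn H B a b := by
  obtain ⟨p, hp⟩ := h
  induction p with
  | nil => exact refl (hAB (hp _ (by simp)))
  | cons huv q ih =>
    exact (hadj _ (hp _ (by simp)) _ (hp _ (by simp)) huv).trans
      (ih fun x hx => hp x (by simp [hx]))

end ReachIn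

section Connectivity

variable {V : Type} {G H : SimpleGraph V} {A : Set V}

lemma ConnOn.of_adj_reachIn (hG : ConnOn G A)
    (hadj : ∀ u ∈ A, ∀ v ∈ A, G.Adj u v → ReachIn H A u v) : ConnOn H A :=
  ⟨hG.1, fun a ha b hb => (hG.2 a ha b hb).mono_of_adj subset_rfl hadj⟩

lemma connOn_insert {w j : V} (hreach : ∀ a ∈ A, ∀ b ∈ A, ReachIn H (insert w A) a b)
    (hj : j ∈ A) (hwj : H.Adj w j) : ConnOn H (insert w A) := by
  have hw : ∀ a ∈ A, ReachIn H (insert w A) w a := fun a ha =>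
    (ReachIn.of_adj hwj (Set.mem_insert _ _) (Set.mem_insert_of_mem _ hj)).trans
      (hreach j hj a ha)
  refine ⟨Set.insert_nonempty _ _, ?_⟩
  rintro a (rfl | ha) b (rfl | hb)
  · exact .refl (Set.mem_insert _ _)
  · exact hw b hb
  · exact (hw a ha).symm
  · exact hreach a ha b hb

lemma discOn_of_forall_not_adj {w a : V} (hw : w ∈ A) (ha : a ∈ A) (hwa : w ≠ a)
    (hiso : ∀ x ∈ A, ¬ H.Adj w x) : DiscOn H A := by
  refine ⟨w, hw, a, ha, fun ⟨p, hp⟩ => ?_⟩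
  cases p with
  | nil => exact hwa rfl
  | cons h q => exact hiso _ (hp _ (by simp)) h

end Connectivity

section GStar

variable {V : Type} {G : SimpleGraph V} {S U : Set V} {u v w : V}

lemma gstar_insert_adj_of_mem_support (hwS : w ∉ S) (hu : u ∈ S) (hv : v ∈ S)
    {p : G.Walk u v} (hp : p.IsPath) (hint : ∀ x ∈ p.support, x ≠ u → x ≠ v → x ∉ S)
    (hw : w ∈ p.support) : (GStar G (insert w S)).Adj u w := by
  classical
  refine ⟨ne_of_mem_of_not_mem hu hwS, Set.mem_insert_of_mem _ hu, Set.mem_insert _ _,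
    p.takeUntil w hw, fun x hx hxu hxw => ?_⟩
  have hxv : x ≠ v := by
    rintro rfl
    exact SimpleGraph.Walk.endpoint_notMem_support_takeUntil hp hw
      (ne_of_mem_of_not_mem hv hwS) hx
  rintro (rfl | hxS)
  · exact hxw rfl
  · exact hint x (p.support_takeUntil_subset_support hw hx) hxu hxv hxS

lemma gstar_insert_adj_or_of_adj (hwS : w ∉ S) (h : (GStar G S).Adj u v) :
    (GStar G (insert w S)).Adj u v ∨
      (GStar G (insert w S)).Adj u w ∧ (GStar G (insert w S)).Adj w v := by
  classical
  obtain ⟨hne, hu, hv, p, hp⟩ := h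
  have hpath := p.bypass_isPath
  have hint : ∀ x ∈ p.bypass.support, x ≠ u → x ≠ v → x ∉ S :=
    fun x hx => hp x (p.support_bypass_subset_support hx)
  by_cases hw : w ∈ p.bypass.support
  · refine .inr ⟨gstar_insert_adj_of_mem_support hwS hu hv hpath hint hw, ?_⟩
    exact (gstar_insert_adj_of_mem_support hwS hv hu hpath.reverse
      (fun x hx hxv hxu => hint x (by simpa using hx) hxu hxv) (by simpa using hw)).symm
  · refine .inl ⟨hne, Set.mem_insert_of_mem _ hu, Set.mem_insert_of_mem _ hv, p.bypass,
      fun x hx hxu hxv => ?_⟩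
    rintro (rfl | hxS)
    · exact hw hx
    · exact hint x hx hxu hxv hxS

variable (hwS : w ∉ S) (hconn : ConnOn (GStar G S) (S \ U))
include hwS hconn

lemma connOn_gstar_insert_sdiff (hwU : w ∉ U)
    (hnb : ({j | (GStar G (insert w S)).Adj j w} \ U).Nonempty) :
    ConnOn (GStar G (insert w S)) (insert w S \ U) := by
  obtain ⟨j, hjw, hjU⟩ := hnb
  have hjS : j ∈ S := (Set.mem_insert_iff.mp hjw.2.1).resolve_left hjw.1
  rw [Set.insert_sdiff_of_notMem _ hwU]
  refine connOn_insert (fun a ha b hb => (hconn.2 a ha b hb).mono_of_adj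
    (Set.subset_insert _ _) fun x hx y hy hxy => ?_) ⟨hjS, hjU⟩ hjw.symm
  have hx' := Set.mem_insert_of_mem w hx
  have hy' := Set.mem_insert_of_mem w hy
  rcases gstar_insert_adj_or_of_adj hwS hxy with h | ⟨hxw, hwy⟩
  · exact .of_adj h hx' hy'
  · exact (ReachIn.of_adj hxw hx' (Set.mem_insert _ _)).trans
      (.of_adj hwy (Set.mem_insert _ _) hy')

lemma connOn_gstar_insert_sdiff_insert
    (hnb : ({j | (GStar G (insert w S)).Adj j w} \ U).Subsingleton) :
    ConnOn (GStar G (insert w S)) (insert w S \ (U ∪ {w})) := by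
  rw [Set.insert_sdiff_of_mem _ (by simp), Set.union_singleton, Set.sdiff_insert_of_notMem hwS]
  refine hconn.of_adj_reachIn fun x hx y hy hxy => ?_
  rcases gstar_insert_adj_or_of_adj hwS hxy with h | ⟨hxw, hwy⟩
  · exact .of_adj h hx hy
  -- `w` would have the two distinct neighbours `x` and `y` outside `U`.
  · exact absurd (hnb ⟨hxw, hx.2⟩ ⟨hwy.symm, hy.2⟩) hxy.1

lemma discOn_gstar_insert_sdiff (hwU : w ∉ U)
    (hnb : {j | (GStar G (insert w S)).Adj j w} \ U = ∅) :
    DiscOn (GStar G (insert w S)) (insert w S \ U) := by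
  obtain ⟨a, haS, haU⟩ := hconn.1
  exact discOn_of_forall_not_adj ⟨Set.mem_insert _ _, hwU⟩ ⟨Set.mem_insert_of_mem _ haS, haU⟩
    (ne_of_mem_of_not_mem haS hwS).symm
    fun x hx hwx => Set.eq_empty_iff_forall_notMem.mp hnb x ⟨hwx.symm, hx.2⟩

end GStar

/-- With `V = Fin n`, `N_m` the first `m` vertices, `U ⊆ N_{m−1}`
with `G*(N_{m−1}) \ U` connected, and `γ_m` the set of neighbors of the last
vertex `m` of `N_m` in `G*(N_m)`:
* if `γ_m − U = ∅`, then `G*(N_m) \ (U ∪ {m})` is connected and `G*(N_m) \ U`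
  is disconnected;
* if `|γ_m − U| = 1`, then both `G*(N_m) \ U` and `G*(N_m) \ (U ∪ {m})` are
  connected;
* if `|γ_m − U| ≥ 2`, then `G*(N_m) \ U` is connected. -/
theorem stmt_19 {n : ℕ} (G : SimpleGraph (Fin n)) (m : ℕ)
    (hm : 2 ≤ m) (hmn : m ≤ n)
    (U : Set (Fin n)) (hU : ∀ u ∈ U, (u : ℕ) < m - 1)
    (hconn : ConnOn (GStar G {i : Fin n | (i : ℕ) < m - 1})
      ({i : Fin n | (i : ℕ) < m - 1} \ U))
    (γ : Set (Fin n))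
    (hγ : γ = {j : Fin n |
      (GStar G {i : Fin n | (i : ℕ) < m}).Adj j (⟨m - 1, by omega⟩ : Fin n)}) :
    ((γ \ U) = ∅ →
      ConnOn (GStar G {i : Fin n | (i : ℕ) < m})
        ({i : Fin n | (i : ℕ) < m} \ (U ∪ {(⟨m - 1, by omega⟩ : Fin n)})) ∧
      DiscOn (GStar G {i : Fin n | (i : ℕ) < m})
        ({i : Fin n | (i : ℕ) < m} \ U)) ∧
    ((γ \ U).ncard = 1 →
      ConnOn (GStar G {i : Fin n | (i : ℕ) < m})
        ({i : Fin n | (i : ℕ) < m} \ U) ∧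
      ConnOn (GStar G {i : Fin n | (i : ℕ) < m})
        ({i : Fin n | (i : ℕ) < m} \ (U ∪ {(⟨m - 1, by omega⟩ : Fin n)}))) ∧
    (2 ≤ (γ \ U).ncard →
      ConnOn (GStar G {i : Fin n | (i : ℕ) < m})
        ({i : Fin n | (i : ℕ) < m} \ U)) := by
  set S : Set (Fin n) := {i : Fin n | (i : ℕ) < m - 1}
  set w : Fin n := ⟨m - 1, by omega⟩
  have hwS : w ∉ S := lt_irrefl (m - 1)
  have hwU : w ∉ U := fun h => hwS (hU w h)
  have hinsert : {i : Fin n | (i : ℕ) < m} = insert w S := by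
    ext i
    simp only [Set.mem_ofPred_eq, Set.mem_insert_iff, Fin.ext_iff, S, w]
    omega
  rw [hinsert] at hγ ⊢
  subst hγ
  refine ⟨fun h0 => ⟨?_, ?_⟩, fun h1 => ⟨?_, ?_⟩, fun h2 => ?_⟩
  · exact connOn_gstar_insert_sdiff_insert hwS hconn (h0 ▸ Set.subsingleton_empty)
  · exact discOn_gstar_insert_sdiff hwS hconn hwU h0
  · exact connOn_gstar_insert_sdiff hwS hconn hwU (Set.nonempty_of_ncard_ne_zero (by omega))
  · exact connOn_gstar_insert_sdiff_insert hwS hconn (Set.ncard_le_one_iff_subsingleton.mp h1.le)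
  · exact connOn_gstar_insert_sdiff hwS hconn hwU (Set.nonempty_of_ncard_ne_zero (by omega))
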